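/- In the Böttcher case (p_1 = 0), with ν := min{i ≥ 0 : p_i ≠ 0} ≥ 2 and β := log ν / log μ, there exists ε_0 > 0 such that for all 0 < ε < ε_0, −log P{W < ε} ≤ ((−log p_ν) · ν²/(ν − 1)) · ε^{−β/(1−β)}. -/

import Mathlib

/-!
Force the first `n` generations to be `ν`-regular, an event of probability
`p_ν ^ (1 + ν + ⋯ + ν ^ (n - 1))` on which `Z_n = ν ^ n`. The later generations are independent
of this event, and Doob's maximal inequality for the martingale `Z_{n+k} / (ν ^ n μ ^ k)` shows
that with probability at least `1 - 1/c` it stays below `c`, whence `W ≤ c (ν / μ) ^ n`. Taking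
`n` minimal with `c (ν / μ) ^ n < ε` gives `ν ^ n ≤ c ^ γ ε ^ (-γ)` for `γ = β / (1 - β)`, since
`(ν / μ) ^ (-γ) = ν`.
-/

open MeasureTheory ProbabilityTheory Filter Finset Topology
open scoped ENNReal NNReal

lemma lintegral_natCast_eq_ofReal_of_hasSum {Ω : Type*} [MeasurableSpace Ω] {P : Measure Ω}
    [IsFiniteMeasure P] {f : Ω → ℕ} (hf : Measurable f) {p : ℕ → ℝ}
    (hp : ∀ k, (P {ω | f ω = k}).toReal = p k) {m : ℝ}
    (hm : HasSum (fun k : ℕ => (k : ℝ) * p k) m) :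
    ∫⁻ ω, (f ω : ℝ≥0∞) ∂P = ENNReal.ofReal m := by
  have hpnn : ∀ k, 0 ≤ p k := fun k => hp k ▸ ENNReal.toReal_nonneg
  rw [← lintegral_map (f := fun k : ℕ => (k : ℝ≥0∞)) measurable_from_nat hf, lintegral_countable',
    ← hm.tsum_eq, ENNReal.ofReal_tsum_of_nonneg (fun k => mul_nonneg k.cast_nonneg (hpnn k))
      hm.summable]
  congr 1 with k
  rw [Measure.map_apply hf (measurableSet_singleton k), ENNReal.ofReal_mul k.cast_nonneg,
    ENNReal.ofReal_natCast, ← hp k, ENNReal.ofReal_toReal (measure_ne_top _ _)]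
  rfl

lemma indicator_sum_range_eq_tsum {Ω : Type*} (s : Set Ω) (g : Ω → ℕ) (f : ℕ → Ω → ℝ≥0∞)
    (ω : Ω) :
    s.indicator (fun ω => ∑ i ∈ range (g ω), f i ω) ω
      = ∑' i, (s ∩ {ω | i < g ω}).indicator (f i) ω := by
  by_cases hω : ω ∈ s
  · rw [Set.indicator_of_mem hω, sum_eq_tsum_indicator]
    congr 1 with i
    simp [Set.indicator, hω]
  · simp [hω]

lemma setLIntegral_sum_range_eq_mul {Ω : Type*} {mL mR mΩ : MeasurableSpace Ω} {P : Measure Ω}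
    (hL : mL ≤ mΩ) (hR : mR ≤ mΩ) (hind : Indep mL mR P)
    {f : ℕ → Ω → ℝ≥0∞} (hf : ∀ i, Measurable[mR] (f i)) {c : ℝ≥0∞}
    (hc : ∀ i, ∫⁻ ω, f i ω ∂P = c) {g : Ω → ℕ} (hg : Measurable[mL] g) {s : Set Ω}
    (hs : MeasurableSet[mL] s) :
    ∫⁻ ω in s, ∑ i ∈ range (g ω), f i ω ∂P = c * ∫⁻ ω in s, (g ω : ℝ≥0∞) ∂P := by
  have hsi : ∀ i, MeasurableSet[mL] (s ∩ {ω | i < g ω}) :=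
    fun i => hs.inter (hg measurableSet_Ioi)
  have hfi : ∀ i, Measurable (f i) := fun i => (hf i).mono hR le_rfl
  have hcount : ∀ ω, s.indicator (fun ω => (g ω : ℝ≥0∞)) ω
      = ∑' i, (s ∩ {ω | i < g ω}).indicator 1 ω := by
    intro ω
    simpa [Pi.one_def] using indicator_sum_range_eq_tsum s g (fun _ _ => 1) ω
  calc ∫⁻ ω in s, ∑ i ∈ range (g ω), f i ω ∂P
      = ∑' i, ∫⁻ ω, (s ∩ {ω | i < g ω}).indicator 1 ω * f i ω ∂P := by
        simp_rw [← Set.indicator_mul_left, Pi.one_apply, one_mul]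
        rw [← lintegral_tsum fun i => ((hfi i).indicator (hL _ (hsi i))).aemeasurable,
          ← lintegral_indicator (hL _ hs)]
        simp_rw [indicator_sum_range_eq_tsum]
    _ = ∑' i, P (s ∩ {ω | i < g ω}) * c := by
        congr 1 with i
        rw [lintegral_mul_eq_lintegral_mul_lintegral_of_independent_measurableSpace hL hR hind
          (Measurable.indicator (f := 1) measurable_const (hsi i)) (hf i), hc,
          lintegral_indicator_one (hL _ (hsi i))]
    _ = c * ∫⁻ ω in s, (g ω : ℝ≥0∞) ∂P := by
        rw [← lintegral_indicator (hL _ hs), lintegral_congr hcount,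
          lintegral_tsum fun i => (measurable_one.indicator (hL _ (hsi i))).aemeasurable,
          ← ENNReal.tsum_mul_left]
        congr 1 with i
        rw [lintegral_indicator_one (hL _ (hsi i)), mul_comm]

lemma MeasureTheory.Martingale.mul_measure_exists_le_le {Ω : Type*} {m0 : MeasurableSpace Ω}
    {μ : Measure Ω} [IsFiniteMeasure μ] {𝒢 : Filtration ℕ m0} {f : ℕ → Ω → ℝ} (hf : Martingale f 𝒢 μ)
    (hnonneg : 0 ≤ f) (ε : ℝ≥0) :
    ε * μ {ω | ∃ k, (ε : ℝ) ≤ f k ω} ≤ ENNReal.ofReal (∫ ω, f 0 ω ∂μ) := by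
  set S : ℕ → Set Ω := fun n =>
    {ω | (ε : ℝ) ≤ (range (n + 1)).sup' nonempty_range_add_one fun k => f k ω}
  have hS : {ω | ∃ k, (ε : ℝ) ≤ f k ω} = ⋃ n, S n := by
    ext ω
    simp only [S, Set.mem_ofPred_eq, Set.mem_iUnion, le_sup'_iff, mem_range]
    exact ⟨fun ⟨k, hk⟩ => ⟨k, k, k.lt_succ_self, hk⟩, fun ⟨_, k, _, hk⟩ => ⟨k, hk⟩⟩
  have hmono : Monotone S := fun m n hmn ω (hω : (ε : ℝ) ≤ _) =>
    show (ε : ℝ) ≤ _ from hω.trans (sup'_mono _ (range_subset_range.2 (by omega)) _)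
  rw [hS, hmono.measure_iUnion, ENNReal.mul_iSup]
  refine iSup_le fun n => (maximal_ineq hf.submartingale hnonneg n).trans
    (ENNReal.ofReal_le_ofReal ?_)
  calc ∫ ω in S n, f n ω ∂μ ≤ ∫ ω, f n ω ∂μ :=
        setIntegral_le_integral (hf.integrable n) (Eventually.of_forall (hnonneg n))
    _ = ∫ ω, f 0 ω ∂μ := by
        simpa using (hf.setIntegral_eq n.zero_le MeasurableSet.univ).symm

lemma measurable_sum_range {Ω : Type*} [MeasurableSpace Ω] {g : Ω → ℕ} (hg : Measurable g)
    {f : ℕ → Ω → ℕ} (hf : ∀ i, Measurable (f i)) :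
    Measurable fun ω => ∑ i ∈ range (g ω), f i ω :=
  (measurable_from_prod_countable_left (f := fun q : Ω × ℕ => ∑ i ∈ range q.2, f i q.1)
    fun m => Finset.measurable_sum (range m) fun i _ => hf i).comp (measurable_id.prodMk hg)

lemma exists_mul_pow_succ_lt_le {r c ε : ℝ} (hr0 : 0 ≤ r) (hr1 : r < 1) (hε : 0 < ε)
    (hεc : ε ≤ c) : ∃ n : ℕ, c * r ^ (n + 1) < ε ∧ ε ≤ c * r ^ n := by
  have hex : ∃ n, c * r ^ n < ε := by
    have h := (tendsto_pow_atTop_nhds_zero_of_lt_one hr0 hr1).const_mul c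
    rw [mul_zero] at h
    exact (h.eventually_lt_const hε).exists
  obtain ⟨n, hn⟩ : ∃ n, Nat.find hex = n + 1 := Nat.exists_eq_succ_of_ne_zero fun h0 => by
    have h := Nat.find_spec hex
    rw [h0, pow_zero, mul_one] at h
    exact hεc.not_gt h
  exact ⟨n, hn ▸ Nat.find_spec hex, not_lt.1 (Nat.find_min hex (by omega))⟩

lemma rpow_neg_div_one_sub {x y : ℝ} (hx : 1 < x) (hxy : x < y) :
    (x / y) ^ (-((Real.log x / Real.log y) / (1 - Real.log x / Real.log y))) = x := by
  have hx0 : 0 < x := one_pos.trans hx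
  have hly : 0 < Real.log y := Real.log_pos (hx.trans hxy)
  have hlxy : Real.log x < Real.log y := Real.log_lt_log hx0 hxy
  rw [Real.rpow_def_of_pos (div_pos hx0 (hx0.trans hxy)), Real.log_div hx0.ne' (hx0.trans hxy).ne']
  conv_rhs => rw [← Real.exp_log hx0]
  congr 1
  field_simp [sub_ne_zero.2 hlxy.ne']
  ring

lemma natCast_pow_le_of_le_mul_pow {ν : ℕ} {μ γ c ε : ℝ} (hν : 0 < ν) (hμ : 0 < μ)
    (hγ : 0 ≤ γ) (hc : 0 < c) (hε : 0 < ε) (hrγ : ((ν : ℝ) / μ) ^ (-γ) = ν) {n : ℕ}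
    (hle : ε ≤ c * ((ν : ℝ) / μ) ^ n) :
    (ν : ℝ) ^ n ≤ c ^ γ * ε ^ (-γ) := by
  have hr : (0 : ℝ) < ν / μ := div_pos (Nat.cast_pos.2 hν) hμ
  calc (ν : ℝ) ^ n = (((ν : ℝ) / μ) ^ n) ^ (-γ) := by
        rw [← Real.rpow_natCast (_ / _), ← Real.rpow_mul hr.le, mul_comm, Real.rpow_mul hr.le,
          hrγ, Real.rpow_natCast]
    _ ≤ (ε / c) ^ (-γ) :=
        Real.rpow_le_rpow_of_nonpos (div_pos hε hc) ((div_le_iff₀' hc).2 hle) (neg_nonpos.2 hγ)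
    _ = c ^ γ * ε ^ (-γ) := by
        rw [Real.div_rpow hε.le hc.le, Real.rpow_neg hc.le, div_inv_eq_mul, mul_comm]

lemma geom_sum_range_succ_le {x : ℝ} (hx : 1 < x) (n : ℕ) :
    ∑ m ∈ range (n + 1), x ^ m ≤ x * x ^ n / (x - 1) := by
  rw [geom_sum_eq hx.ne', pow_succ']
  gcongr
  linarith

lemma neg_log_pow_geom_sum_mul_le {ν : ℕ} (hν : 1 < ν) {ρ q X : ℝ} (hρ0 : 0 < ρ)
    (hρ1 : ρ < 1) (hq : 0 < q) {n : ℕ} (hn : (ν : ℝ) ^ n ≤ X) :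
    -Real.log (ρ ^ (∑ m ∈ range (n + 1), ν ^ m) * q)
      ≤ -Real.log ρ * ν * X / (ν - 1) - Real.log q := by
  have hν1 : (1 : ℝ) < ν := by exact_mod_cast hν
  have hS : ((∑ m ∈ range (n + 1), ν ^ m : ℕ) : ℝ) ≤ ν * X / (ν - 1) := by
    push_cast
    exact (geom_sum_range_succ_le hν1 n).trans (by gcongr)
  rw [Real.log_mul (pow_pos hρ0 _).ne' hq.ne', Real.log_pow]
  calc _ = -Real.log ρ * ((∑ m ∈ range (n + 1), ν ^ m : ℕ) : ℝ) - Real.log q := by ring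
    _ ≤ -Real.log ρ * (ν * X / (ν - 1)) - Real.log q := by
        gcongr
        exact neg_nonneg.2 (Real.log_nonpos hρ0.le hρ1.le)
    _ = _ := by ring

lemma eventually_neg_log_le_of_forall_le {ν : ℕ} (hν : 2 ≤ ν) {μ ρ : ℝ} (hνμ : (ν : ℝ) < μ)
    (hρ0 : 0 < ρ) (hρ1 : ρ < 1) {F : ℝ → ℝ}
    (hF : ∀ c : ℝ, 1 < c → ∀ (n : ℕ) (ε : ℝ), c * ((ν : ℝ) / μ) ^ n < ε →
      ρ ^ (∑ m ∈ range n, ν ^ m) * (1 - c⁻¹) ≤ F ε) :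
    ∀ᶠ ε in 𝓝[>] 0, -Real.log (F ε) ≤ (-Real.log ρ) * (ν : ℝ) ^ 2 / ((ν : ℝ) - 1) *
      ε ^ (-(Real.log ν / Real.log μ) / (1 - Real.log ν / Real.log μ)) := by
  have hν1 : (1 : ℝ) < ν := by exact_mod_cast hν
  have hν0 : (0 : ℝ) < ν := one_pos.trans hν1
  have hμ0 : 0 < μ := hν0.trans hνμ
  have hrγ := rpow_neg_div_one_sub hν1 hνμ
  rw [neg_div]
  set γ := Real.log ν / Real.log μ / (1 - Real.log ν / Real.log μ)
  have hlμ : 0 < Real.log μ := Real.log_pos (hν1.trans hνμ)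
  have hγ : 0 < γ := div_pos (div_pos (Real.log_pos hν1) hlμ)
    (sub_pos.2 ((div_lt_one hlμ).2 (Real.log_lt_log hν0 hνμ)))
  have hsqrt : 1 < √(ν : ℝ) := Real.lt_sqrt zero_le_one |>.2 (by simpa using hν1)
  -- `c ^ γ = √ν < ν` leaves room in the constant to absorb the factor `1 - c⁻¹`.
  set c := √(ν : ℝ) ^ γ⁻¹
  have hc : 1 < c := Real.one_lt_rpow hsqrt (inv_pos.2 hγ)
  have hcγ : c ^ γ = √ν := Real.rpow_inv_rpow (Real.sqrt_nonneg _) hγ.ne'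
  set L := -Real.log ρ
  have hL : 0 < L := neg_pos.2 (Real.log_neg hρ0 hρ1)
  set D := L * ν * (ν - √ν) / (ν - 1)
  have hsqrt_lt : √(ν : ℝ) < ν := (Real.sqrt_lt' hν0).2 (by nlinarith)
  have hD : 0 < D := div_pos (by nlinarith [mul_pos hL hν0]) (by linarith)
  filter_upwards [self_mem_nhdsWithin, Ioo_mem_nhdsGT one_pos,
    (tendsto_rpow_neg_nhdsGT_zero (neg_neg_of_pos hγ)).eventually_ge_atTop
      (-Real.log (1 - c⁻¹) / D)] with ε (hε : 0 < ε) hε1 hεA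
  obtain ⟨n, hlt, hle⟩ := exists_mul_pow_succ_lt_le (div_pos hν0 hμ0).le
    ((div_lt_one hμ0).2 hνμ) hε (hε1.2.le.trans hc.le)
  have hνn := natCast_pow_le_of_le_mul_pow (by omega) hμ0 hγ.le (one_pos.trans hc) hε hrγ hle
  rw [hcγ] at hνn
  have hc' : 0 < 1 - c⁻¹ := sub_pos.2 (inv_lt_one_of_one_lt₀ hc)
  calc -Real.log (F ε)
      ≤ -Real.log (ρ ^ (∑ m ∈ range (n + 1), ν ^ m) * (1 - c⁻¹)) :=
        neg_le_neg (Real.log_le_log (by positivity) (hF c hc (n + 1) ε hlt))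
    _ ≤ L * ν * (√ν * ε ^ (-γ)) / (ν - 1) + D * ε ^ (-γ) := by
        have := neg_log_pow_geom_sum_mul_le (by omega) hρ0 hρ1 hc' hνn
        linarith [(div_le_iff₀' hD).1 hεA]
    _ = L * ν ^ 2 / (ν - 1) * ε ^ (-γ) := by
        simp only [D]
        field_simp [(by linarith : (ν : ℝ) - 1 ≠ 0)]
        ring

lemma limsup_div_pow_le {x : ℕ → ℝ} {μ b : ℝ} (hμ : 0 < μ) (hx : ∀ m, 0 ≤ x m) {n : ℕ}
    (h : ∀ k, x (n + k) ≤ b * μ ^ (n + k)) : limsup (fun m => x m / μ ^ m) atTop ≤ b := by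
  refine limsup_le_of_le (isCoboundedUnder_le_of_le atTop fun m => by
    have := hx m; positivity) (eventually_atTop.2 ⟨n, fun m hm => ?_⟩)
  obtain ⟨k, rfl⟩ := Nat.exists_eq_add_of_le hm
  exact (div_le_iff₀ (pow_pos hμ _)).2 (h k)

lemma natCast_lt_of_hasSum {p : ℕ → ℝ} (hpnn : ∀ k, 0 ≤ p k) (hpsum : HasSum p 1) {ν : ℕ}
    (hbelow : ∀ k < ν, p k = 0) (hν : p ν < 1) {μ : ℝ}
    (hmean : HasSum (fun k : ℕ => (k : ℝ) * p k) μ) : (ν : ℝ) < μ := by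
  obtain ⟨k, hkν, hk⟩ : ∃ k, k ≠ ν ∧ p k ≠ 0 := by
    by_contra! h
    exact hν.ne (hpsum.unique (hasSum_single ν h)).symm
  have hνk : ν < k := lt_of_le_of_ne (not_lt.1 fun h => hk (hbelow k h)) hkν.symm
  have hle (i : ℕ) : (ν : ℝ) * p i ≤ i * p i := by
    rcases lt_or_ge i ν with h | h
    · simp [hbelow i h]
    · exact mul_le_mul_of_nonneg_right (by exact_mod_cast h) (hpnn i)
  simpa using hasSum_lt hle (mul_lt_mul_of_pos_right (by exact_mod_cast hνk)
    ((hpnn k).lt_of_ne' hk)) (hpsum.mul_left (ν : ℝ)) hmean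

namespace GaltonWatson

variable {Ω : Type*}

abbrev offspringSigma (N : ℕ → ℕ → Ω → ℕ) (s : Set ℕ) : MeasurableSpace Ω :=
  ⨆ q ∈ Prod.fst ⁻¹' s, MeasurableSpace.comap (N q.1 q.2) inferInstance

def restart (N : ℕ → ℕ → Ω → ℕ) (n a : ℕ) : ℕ → Ω → ℕ
  | 0 => fun _ => a
  | k + 1 => fun ω => ∑ i ∈ range (restart N n a k ω), N (n + k) i ω

def regularTree (N : ℕ → ℕ → Ω → ℕ) (j n : ℕ) : Set Ω :=
  {ω | ∀ m < n, ∀ i < j ^ m, N m i ω = j}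

variable (N : ℕ → ℕ → Ω → ℕ)

lemma offspringSigma_mono {s t : Set ℕ} (hst : s ⊆ t) : offspringSigma N s ≤ offspringSigma N t :=
  biSup_mono fun _ hq => hst hq

lemma measurable_offspring {s : Set ℕ} {n : ℕ} (hn : n ∈ s) (i : ℕ) :
    Measurable[offspringSigma N s] (N n i) :=
  measurable_iff_comap_le.2 <|
    le_iSup₂ (f := fun q (_ : q ∈ Prod.fst ⁻¹' s) => MeasurableSpace.comap (N q.1 q.2) _) (n, i) hn

lemma measurable_restart {m : MeasurableSpace Ω} {n a k : ℕ}
    (h : ∀ j < k, ∀ i, Measurable[m] (N (n + j) i)) : Measurable[m] (restart N n a k) := by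
  induction k with
  | zero => exact measurable_const
  | succ k ih => exact measurable_sum_range (ih fun j hj => h j (by omega)) (h k k.lt_succ_self)

lemma restart_add {Z : ℕ → Ω → ℕ} (hZ : ∀ n ω, Z (n + 1) ω = ∑ i ∈ range (Z n ω), N n i ω)
    (n k : ℕ) (ω : Ω) : Z (n + k) ω = restart N n (Z n ω) k ω := by
  induction k with
  | zero => rfl
  | succ k ih => rw [← add_assoc, hZ, ih]; rfl

lemma eq_pow_of_mem_regularTree {Z : ℕ → Ω → ℕ} (hZ0 : ∀ ω, Z 0 ω = 1)
    (hZ : ∀ n ω, Z (n + 1) ω = ∑ i ∈ range (Z n ω), N n i ω) {j n : ℕ} {ω : Ω}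
    (hω : ω ∈ regularTree N j n) : Z n ω = j ^ n := by
  induction n with
  | zero => exact hZ0 ω
  | succ n ih =>
    rw [hZ, ih fun m hm => hω m (by omega), sum_congr rfl fun i hi =>
      hω n n.lt_succ_self i (mem_range.1 hi), sum_const, card_range, smul_eq_mul, pow_succ]

lemma measurableSet_regularTree (j n : ℕ) :
    MeasurableSet[offspringSigma N (Set.Iio n)] (regularTree N j n) := by
  have : regularTree N j n = ⋂ m ∈ Set.Iio n, ⋂ i ∈ Set.Iio (j ^ m), N m i ⁻¹' {j} := by
    ext ω
    simp [regularTree]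
  rw [this]
  exact .biInter (Set.to_countable _) fun m hm => .biInter (Set.to_countable _) fun i _ =>
    measurable_offspring N hm i (measurableSet_singleton j)

variable [mΩ : MeasurableSpace Ω] {N}

lemma offspringSigma_le (hN : ∀ n i, Measurable (N n i)) (s : Set ℕ) :
    offspringSigma N s ≤ mΩ :=
  iSup₂_le fun q _ => (hN q.1 q.2).comap_le

lemma indep_offspringSigma {P : Measure Ω} (hN : ∀ n i, Measurable (N n i))
    (hind : iIndepFun (fun q : ℕ × ℕ => N q.1 q.2) P) {s t : Set ℕ} (hst : Disjoint s t) :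
    Indep (offspringSigma N s) (offspringSigma N t) P :=
  indep_iSup_of_disjoint (m := fun q : ℕ × ℕ => MeasurableSpace.comap (N q.1 q.2) inferInstance)
    (fun q => (hN q.1 q.2).comap_le) hind.iIndep (S := Prod.fst ⁻¹' s) (T := Prod.fst ⁻¹' t)
    (hst.preimage _)

def filtration (hN : ∀ n i, Measurable (N n i)) (n : ℕ) : Filtration ℕ mΩ where
  seq k := offspringSigma N (Set.Iio (n + k))
  mono' _ _ h := offspringSigma_mono N (Set.Iio_subset_Iio (Nat.add_le_add_left h n))
  le' _ := offspringSigma_le hN _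

variable {P : Measure Ω}

lemma measurable_restart_filtration (hN : ∀ n i, Measurable (N n i)) (n a k : ℕ) :
    Measurable[filtration hN n k] (restart N n a k) :=
  measurable_restart N fun j hj i => measurable_offspring N (by simp; omega) i

lemma setLIntegral_restart_succ (hN : ∀ n i, Measurable (N n i))
    (hind : iIndepFun (fun q : ℕ × ℕ => N q.1 q.2) P) {c : ℝ≥0∞}
    (hc : ∀ n i, ∫⁻ ω, (N n i ω : ℝ≥0∞) ∂P = c) {n a k : ℕ} {s : Set Ω} (hs : MeasurableSet[filtration hN n k] s) :
    ∫⁻ ω in s, (restart N n a (k + 1) ω : ℝ≥0∞) ∂P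
      = c * ∫⁻ ω in s, (restart N n a k ω : ℝ≥0∞) ∂P := by
  simp only [restart, Nat.cast_sum]
  exact setLIntegral_sum_range_eq_mul (offspringSigma_le hN _) (offspringSigma_le hN _)
    (indep_offspringSigma hN hind (Set.Iio_disjoint_Ici le_rfl))
    (fun i => measurable_from_nat.comp (measurable_offspring N Set.self_mem_Ici i))
    (fun i => hc _ i) (measurable_restart_filtration hN n a k) hs

lemma lintegral_restart [IsProbabilityMeasure P] (hN : ∀ n i, Measurable (N n i))
    (hind : iIndepFun (fun q : ℕ × ℕ => N q.1 q.2) P) {c : ℝ≥0∞}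
    (hc : ∀ n i, ∫⁻ ω, (N n i ω : ℝ≥0∞) ∂P = c) (n a k : ℕ) :
    ∫⁻ ω, (restart N n a k ω : ℝ≥0∞) ∂P = a * c ^ k := by
  induction k with
  | zero => simp [restart]
  | succ k ih =>
    have h := setLIntegral_restart_succ hN hind hc (a := a)
      (MeasurableSet.univ : MeasurableSet[filtration hN n k] Set.univ)
    simp only [Measure.restrict_univ, ih] at h
    rw [h, pow_succ]
    ring

lemma martingale_restart_div_pow [IsProbabilityMeasure P] (hN : ∀ n i, Measurable (N n i))
    (hind : iIndepFun (fun q : ℕ × ℕ => N q.1 q.2) P) {μ : ℝ} (hμ : 0 < μ)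
    (hc : ∀ n i, ∫⁻ ω, (N n i ω : ℝ≥0∞) ∂P = ENNReal.ofReal μ) (n a : ℕ) :
    Martingale (fun k ω => (restart N n a k ω : ℝ) / μ ^ k) (filtration hN n) P := by
  have hmeas k : Measurable (restart N n a k) :=
    (measurable_restart_filtration hN n a k).mono ((filtration hN n).le k) le_rfl
  have hset k (s : Set Ω) : ∫ ω in s, (restart N n a k ω : ℝ) ∂P
      = (∫⁻ ω in s, (restart N n a k ω : ℝ≥0∞) ∂P).toReal := by
    simpa using integral_toReal (measurable_from_nat.comp (hmeas k)).aemeasurable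
      (Eventually.of_forall fun ω => ENNReal.natCast_lt_top (restart N n a k ω))
  refine martingale_of_setIntegral_eq_succ (fun k => ((measurable_from_nat.comp
    (measurable_restart_filtration hN n a k)).div_const _).stronglyMeasurable)
    (fun k => ?_) fun k s hs => ?_
  · refine Integrable.div_const ?_ _
    simpa using integrable_toReal_of_lintegral_ne_top
      (f := fun ω => (restart N n a k ω : ℝ≥0∞)) (measurable_from_nat.comp (hmeas k)).aemeasurable
      (by rw [lintegral_restart hN hind hc]; finiteness)
  · rw [integral_div, integral_div, hset, hset, setLIntegral_restart_succ hN hind hc hs,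
      ENNReal.toReal_mul, ENNReal.toReal_ofReal hμ.le, pow_succ]
    field_simp

lemma mul_measure_exists_restart_ge_le [IsProbabilityMeasure P] (hN : ∀ n i, Measurable (N n i))
    (hind : iIndepFun (fun q : ℕ × ℕ => N q.1 q.2) P) {μ : ℝ} (hμ : 0 < μ)
    (hc : ∀ n i, ∫⁻ ω, (N n i ω : ℝ≥0∞) ∂P = ENNReal.ofReal μ) (n a : ℕ) (t : ℝ≥0) :
    t * P {ω | ∃ k, (t : ℝ) * μ ^ k ≤ restart N n a k ω} ≤ a := by
  have h := (martingale_restart_div_pow hN hind hμ hc n a).mul_measure_exists_le_le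
    (fun k ω => by positivity) t
  simp_rw [le_div_iff₀ (pow_pos hμ _)] at h
  simpa [restart] using h

lemma measure_regularTree [IsFiniteMeasure P] (hind : iIndepFun (fun q : ℕ × ℕ => N q.1 q.2) P)
    {p : ℕ → ℝ} (hdist : ∀ n i k, (P {ω | N n i ω = k}).toReal = p k) (j n : ℕ) :
    P (regularTree N j n) = ENNReal.ofReal (p j) ^ (∑ m ∈ range n, j ^ m) := by
  set T : Finset (ℕ × ℕ) :=
    ((range n).sigma fun m => range (j ^ m)).map (Equiv.sigmaEquivProd ℕ ℕ).toEmbedding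
  have hT : regularTree N j n = ⋂ q ∈ T, N q.1 q.2 ⁻¹' {j} := by
    ext ω
    simp only [regularTree, T, Set.mem_ofPred_eq, Set.mem_iInter, mem_map_equiv, mem_sigma,
      mem_range, Set.mem_preimage, Set.mem_singleton_iff]
    exact ⟨fun h q hq => h q.1 hq.1 q.2 hq.2, fun h m hm i hi => h (m, i) ⟨hm, hi⟩⟩
  have hNj (q : ℕ × ℕ) : P (N q.1 q.2 ⁻¹' {j}) = ENNReal.ofReal (p j) := by
    rw [← hdist q.1 q.2 j, ENNReal.ofReal_toReal (measure_ne_top _ _)]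
    rfl
  rw [hT, hind.measure_inter_preimage_eq_mul T fun q _ => measurableSet_singleton j,
    prod_congr rfl fun q _ => hNj q, prod_const]
  simp [T]

lemma one_sub_inv_le_measureReal_restart_lt [IsProbabilityMeasure P]
    (hN : ∀ n i, Measurable (N n i)) (hind : iIndepFun (fun q : ℕ × ℕ => N q.1 q.2) P)
    {μ : ℝ} (hμ : 0 < μ) (hc : ∀ n i, ∫⁻ ω, (N n i ω : ℝ≥0∞) ∂P = ENNReal.ofReal μ)
    (n : ℕ) {a : ℕ} (ha : 0 < a) {c : ℝ} (hc0 : 0 < c) :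
    1 - c⁻¹ ≤ P.real {ω | ∀ k, (restart N n a k ω : ℝ) < c * a * μ ^ k} := by
  set S := {ω | ∀ k, (restart N n a k ω : ℝ) < c * a * μ ^ k}
  have hS : MeasurableSet S := by
    simp only [S, Set.ofPred_forall]
    exact .iInter fun k => measurableSet_lt (measurable_from_nat.comp
      ((measurable_restart_filtration hN n a k).mono ((filtration hN n).le k) le_rfl))
      measurable_const
  have hSc : Sᶜ = {ω | ∃ k, c * a * μ ^ k ≤ restart N n a k ω} := by
    ext ω
    simp [S]
  have hdoob := ENNReal.toReal_mono (ENNReal.natCast_ne_top a)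
    (mul_measure_exists_restart_ge_le hN hind hμ hc n a (c * a).toNNReal)
  rw [ENNReal.toReal_mul, ENNReal.coe_toReal, Real.coe_toNNReal _ (by positivity),
    ENNReal.toReal_natCast, ← measureReal_def, ← hSc, probReal_compl_eq_one_sub hS] at hdoob
  have ha' : (0 : ℝ) < a := Nat.cast_pos.2 ha
  have h : 1 - P.real S ≤ c⁻¹ := by
    rw [← one_div, le_div_iff₀' hc0]
    nlinarith
  linarith

theorem le_measureReal_limsup_div_pow_le [IsProbabilityMeasure P]
    (hN : ∀ n i, Measurable (N n i)) (hind : iIndepFun (fun q : ℕ × ℕ => N q.1 q.2) P)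
    {p : ℕ → ℝ} (hdist : ∀ n i k, (P {ω | N n i ω = k}).toReal = p k) {μ : ℝ}
    (hmean : HasSum (fun k : ℕ => (k : ℝ) * p k) μ) (hμ : 0 < μ) {Z : ℕ → Ω → ℕ}
    (hZ0 : ∀ ω, Z 0 ω = 1) (hZ : ∀ n ω, Z (n + 1) ω = ∑ i ∈ range (Z n ω), N n i ω)
    {j : ℕ} (hj : 0 < j) {c : ℝ} (hc : 0 < c) (n : ℕ) :
    p j ^ (∑ m ∈ range n, j ^ m) * (1 - c⁻¹)
      ≤ P.real {ω | limsup (fun m => (Z m ω : ℝ) / μ ^ m) atTop ≤ c * (j / μ) ^ n} := by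
  have hmeanN n i := lintegral_natCast_eq_ofReal_of_hasSum (hN n i) (hdist n i) hmean
  set A := regularTree N j n
  set C := {ω | ∀ k, (restart N n (j ^ n) k ω : ℝ) < c * (j ^ n : ℕ) * μ ^ k}
  have hC : MeasurableSet[offspringSigma N (Set.Ici n)] C := by
    simp only [C, Set.ofPred_forall]
    exact .iInter fun k => measurableSet_lt (measurable_from_nat.comp
      (measurable_restart N fun i _ l => measurable_offspring N (by simp) l)) measurable_const
  have hAC : P (A ∩ C) = P A * P C :=
    (Indep_iff _ _ _).1 (indep_offspringSigma hN hind (Set.Iio_disjoint_Ici le_rfl)) A C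
      (measurableSet_regularTree N j n) hC
  have hsub : A ∩ C ⊆ {ω | limsup (fun m => (Z m ω : ℝ) / μ ^ m) atTop ≤ c * (j / μ) ^ n} := by
    rintro ω ⟨hA, hCω⟩
    refine limsup_div_pow_le hμ (fun m => Nat.cast_nonneg _) (n := n) fun k => ?_
    rw [restart_add N hZ, eq_pow_of_mem_regularTree N hZ0 hZ hA]
    calc _ ≤ c * (j ^ n : ℕ) * μ ^ k := (hCω k).le
      _ = c * (j / μ) ^ n * μ ^ (n + k) := by
        rw [div_pow, pow_add]
        push_cast
        field_simp
  have hpj : 0 ≤ p j := hdist 0 0 j ▸ ENNReal.toReal_nonneg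
  calc p j ^ (∑ m ∈ range n, j ^ m) * (1 - c⁻¹) ≤ P.real A * P.real C := by
        rw [measureReal_def, measure_regularTree hind hdist, ENNReal.toReal_pow,
          ENNReal.toReal_ofReal hpj]
        exact mul_le_mul_of_nonneg_left (one_sub_inv_le_measureReal_restart_lt hN hind hμ
          hmeanN n (pow_pos hj n) hc) (pow_nonneg hpj _)
    _ = P.real (A ∩ C) := by simp only [measureReal_def, hAC, ENNReal.toReal_mul]
    _ ≤ _ := measureReal_mono hsub

end GaltonWatson

theorem gw_boettcher_upper_bound_general
    {Ω : Type*} [MeasurableSpace Ω] (P : Measure Ω) [IsProbabilityMeasure P]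
    (p : ℕ → ℝ) (N : ℕ → ℕ → Ω → ℕ) (Z : ℕ → Ω → ℕ) (μ : ℝ)
    (hp0 : p 0 = 0) (hpnn : ∀ k, 0 ≤ p k) (hpsum : HasSum p 1)
    (hnondeg : ∀ k, p k < 1)
    (hNmeas : ∀ n i, Measurable (N n i))
    (hNdist : ∀ n i k, (P {ω | N n i ω = k}).toReal = p k)
    (hNindep : iIndepFun (fun ni : ℕ × ℕ => N ni.1 ni.2) P)
    (hmean : HasSum (fun k : ℕ => (k : ℝ) * p k) μ)
    (hZ0 : ∀ ω, Z 0 ω = 1)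
    (hZrec : ∀ n ω, Z (n + 1) ω = ∑ i ∈ Finset.range (Z n ω), N n i ω)
    (W : Ω → ℝ)
    (hW : ∀ ω, W ω = Filter.limsup (fun n => (Z n ω : ℝ) / μ ^ n) Filter.atTop)
    (hp1 : p 1 = 0) (ν : ℕ) (hν : ν = sInf {i : ℕ | p i ≠ 0}) :
    ∃ ε₀ : ℝ, 0 < ε₀ ∧ ∀ ε : ℝ, 0 < ε → ε < ε₀ →
      -Real.log (P {ω | W ω < ε}).toReal ≤
        (-Real.log (p ν)) * (ν : ℝ) ^ 2 / ((ν : ℝ) - 1) * ε ^ (-(Real.log ν / Real.log μ) / (1 - Real.log ν / Real.log μ)) := by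
  obtain ⟨i, hi⟩ : ∃ i, p i ≠ 0 := by
    by_contra! h
    exact one_ne_zero (hpsum.unique (by simp [funext h]))
  have hpν : p ν ≠ 0 := hν ▸ Nat.sInf_mem (s := {i | p i ≠ 0}) ⟨i, hi⟩
  have hbelow : ∀ k < ν, p k = 0 := fun k hk => not_not.1 (Nat.notMem_of_lt_sInf (hν ▸ hk))
  have hν2 : 2 ≤ ν := by
    have h0 : ν ≠ 0 := by rintro rfl; exact hpν hp0
    have h1 : ν ≠ 1 := by rintro rfl; exact hpν hp1
    omega
  have hνμ := natCast_lt_of_hasSum hpnn hpsum hbelow (hnondeg ν) hmean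
  have hμ : 0 < μ := (Nat.cast_nonneg ν).trans_lt hνμ
  have hbound := eventually_neg_log_le_of_forall_le hν2 hνμ ((hpnn ν).lt_of_ne' hpν) (hnondeg ν)
    (F := fun ε => (P {ω | W ω < ε}).toReal) fun c hc n ε hε =>
      (GaltonWatson.le_measureReal_limsup_div_pow_le hNmeas hNindep hNdist hmean hμ hZ0 hZrec
        (by omega) (one_pos.trans hc) n).trans
      (measureReal_mono fun ω (hω : _ ≤ _) => show W ω < ε from hW ω ▸ hω.trans_lt hε)
  obtain ⟨ε₀, hε₀, hsub⟩ := mem_nhdsGT_iff_exists_Ioo_subset.1 hbound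
  exact ⟨ε₀, hε₀, fun ε hε hεε₀ => hsub ⟨hε, hεε₀⟩⟩

theorem gw_boettcher_upper_bound
    {Ω : Type*} [MeasurableSpace Ω] (P : Measure Ω) [IsProbabilityMeasure P]
    (p : ℕ → ℝ) (N : ℕ → ℕ → Ω → ℕ) (Z : ℕ → Ω → ℕ) (μ : ℝ)
    (hp0 : p 0 = 0) (hpnn : ∀ k, 0 ≤ p k) (hpsum : HasSum p 1)
    (hnondeg : ∀ k, p k < 1)
    (hNmeas : ∀ n i, Measurable (N n i))
    (hNdist : ∀ n i k, (P {ω | N n i ω = k}).toReal = p k)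
    (hNindep : iIndepFun (fun ni : ℕ × ℕ => N ni.1 ni.2) P)
    (hmean : HasSum (fun k : ℕ => (k : ℝ) * p k) μ) (hμ : 1 < μ)
    (hNlogN : Summable (fun k : ℕ => (k : ℝ) * Real.log k * p k))
    (hZ0 : ∀ ω, Z 0 ω = 1)
    (hZrec : ∀ n ω, Z (n + 1) ω = ∑ i ∈ Finset.range (Z n ω), N n i ω)
    (W : Ω → ℝ)
    (hW : ∀ ω, W ω = Filter.limsup (fun n => (Z n ω : ℝ) / μ ^ n) Filter.atTop)
    (hp1 : p 1 = 0) (ν : ℕ) (hν : ν = sInf {i : ℕ | p i ≠ 0}) :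
    ∃ ε₀ : ℝ, 0 < ε₀ ∧ ∀ ε : ℝ, 0 < ε → ε < ε₀ →
      -Real.log (P {ω | W ω < ε}).toReal ≤
        (-Real.log (p ν)) * (ν : ℝ) ^ 2 / ((ν : ℝ) - 1) * ε ^ (-(Real.log ν / Real.log μ) / (1 - Real.log ν / Real.log μ)) :=
  gw_boettcher_upper_bound_general P p N Z μ hp0 hpnn hpsum hnondeg hNmeas hNdist hNindep hmean hZ0
    hZrec W hW hp1 ν hν
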